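/- arXiv:1312.4489 — 5 statements merged into one kernel-verified Lean document; each statement's English description precedes it below -/
import Mathlib

section
/- Let (x^{(i)}, y^{(i)}, s^{(i)}) for i = 1,...,ℓ be weighted analytic centers with weights w^{(i)}, i.e., Ax^{(i)} + s^{(i)} = b, s^{(i)} > 0, Aᵀy^{(i)} = 0, S^{(i)}y^{(i)} = w^{(i)}. Then for every β ∈ [0,1]^ℓ with Σᵢβᵢ = 1 and every j ∈ {1,...,ℓ}, the triple (Σᵢ βᵢ x^{(i)}, y^{(j)}, Σᵢ βᵢ s^{(i)}) is the weighted analytic center for the weight w := Σᵢ βᵢ Y^{(j)}(Y^{(i)})^{-1} w^{(i)}, and moreover Σ_k w_k = Σ_k w_k^{(j)}. -/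
open Matrix

/-- `(x, y, s)` is a weighted analytic center for weight `w`. -/
def IsWAC {m n : ℕ} (A : Matrix (Fin m) (Fin n) ℝ) (b w : Fin m → ℝ)
    (x : Fin n → ℝ) (y s : Fin m → ℝ) : Prop :=
  A.mulVec x + s = b ∧ (∀ i, 0 < s i) ∧ A.transpose.mulVec y = 0 ∧
    ∀ i, s i * y i = w i

/-- Convex combinations of weighted analytic centers. For weighted
centers `(x⁽ⁱ⁾, y⁽ⁱ⁾, s⁽ⁱ⁾)` of weights `w⁽ⁱ⁾`, any convex combination
`(Σᵢ βᵢ x⁽ⁱ⁾, y⁽ʲ⁾, Σᵢ βᵢ s⁽ⁱ⁾)` is the weighted analytic center of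
`w = Σᵢ βᵢ Y⁽ʲ⁾(Y⁽ⁱ⁾)⁻¹ w⁽ⁱ⁾`, and `Σₖ wₖ = Σₖ w⁽ʲ⁾ₖ`. -/
theorem convex_combination_of_weighted_centers {m n l : ℕ}
    (A : Matrix (Fin m) (Fin n) ℝ) (b : Fin m → ℝ)
    (x : Fin l → Fin n → ℝ) (y s w : Fin l → Fin m → ℝ)
    (hy : ∀ i k, 0 < y i k)
    (hWAC : ∀ i, IsWAC A b (w i) (x i) (y i) (s i))
    (β : Fin l → ℝ) (hβ0 : ∀ i, 0 ≤ β i) (hβ1 : ∀ i, β i ≤ 1)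
    (hsum : ∑ i, β i = 1) (j : Fin l)
    (wnew : Fin m → ℝ)
    (hwnew : wnew = fun k => ∑ i, β i * (y j k / y i k * w i k)) :
    IsWAC A b wnew (∑ i, β i • x i) (y j) (∑ i, β i • s i) ∧
    ∑ k, wnew k = ∑ k, w j k := by
  have h1 : ∀ i, A.mulVec (x i) + s i = b := fun i => (hWAC i).1
  have h2 : ∀ i k, 0 < s i k := fun i => (hWAC i).2.1
  have h3 : ∀ i, A.transpose.mulVec (y i) = 0 := fun i => (hWAC i).2.2.1
  have h4 : ∀ i k, s i k * y i k = w i k := fun i => (hWAC i).2.2.2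
  have hexists : ∃ i, 0 < β i := by
    by_contra h
    push_neg at h
    have : ∑ i, β i ≤ 0 := Finset.sum_nonpos (fun i _ => h i)
    linarith
  -- key rewriting of wnew terms
  have hterm : ∀ i k, β i * (y j k / y i k * w i k) = β i * (y j k * s i k) := by
    intro i k
    have e : y j k / y i k * (s i k * y i k) = y j k * s i k := by
      rw [mul_comm (s i k) (y i k), ← mul_assoc, div_mul_cancel₀ _ (hy i k).ne']
    rw [← h4 i k, e]
  -- dot product identity
  have hdot : ∀ i, ∑ k, y j k * s i k = ∑ k, y j k * b k := by
    intro i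
    have hv : vecMul (y j) A = 0 := by
      rw [← Matrix.mulVec_transpose]; exact h3 j
    have hz : ∑ k, y j k * (A.mulVec (x i)) k = 0 := by
      have := Matrix.dotProduct_mulVec (y j) A (x i)
      simp only [dotProduct] at this ⊢
      rw [this, hv]
      simp [dotProduct]
    calc ∑ k, y j k * s i k
        = ∑ k, (y j k * (A.mulVec (x i)) k + y j k * s i k) - ∑ k, y j k * (A.mulVec (x i)) k := by
          rw [Finset.sum_add_distrib]; ring
      _ = ∑ k, y j k * b k := by
          rw [hz, sub_zero]
          apply Finset.sum_congr rfl
          intro k _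
          rw [← mul_add]
          congr 1
          have := congrFun (h1 i) k
          simpa using this
  constructor
  · refine ⟨?_, ?_, h3 j, ?_⟩
    · have hlin : A.mulVec (∑ i, β i • x i) = ∑ i, β i • A.mulVec (x i) := by
        rw [show A.mulVec (∑ i, β i • x i) = A.mulVecLin (∑ i, β i • x i) from rfl,
          map_sum]
        simp [Matrix.mulVecLin]
      rw [hlin]
      funext k
      simp only [Pi.add_apply, Finset.sum_apply, Pi.smul_apply, smul_eq_mul]
      rw [← Finset.sum_add_distrib]
      have : ∀ i, β i * (A.mulVec (x i)) k + β i * s i k = β i * b k := by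
        intro i
        rw [← mul_add]
        congr 1
        have := congrFun (h1 i) k
        simpa using this
      rw [Finset.sum_congr rfl (fun i _ => this i), ← Finset.sum_mul, hsum, one_mul]
    · intro k
      simp only [Finset.sum_apply, Pi.smul_apply, smul_eq_mul]
      obtain ⟨i0, hi0⟩ := hexists
      exact Finset.sum_pos' (fun i _ => mul_nonneg (hβ0 i) (h2 i k).le)
        ⟨i0, Finset.mem_univ _, mul_pos hi0 (h2 i0 k)⟩
    · intro k
      rw [hwnew]
      simp only [Finset.sum_apply, Pi.smul_apply, smul_eq_mul]
      rw [Finset.sum_mul]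
      apply Finset.sum_congr rfl
      intro i _
      rw [hterm i k]
      ring
  · rw [hwnew]
    simp only
    calc ∑ k, ∑ i, β i * (y j k / y i k * w i k)
        = ∑ k, ∑ i, β i * (y j k * s i k) := by
          exact Finset.sum_congr rfl (fun k _ => Finset.sum_congr rfl (fun i _ => hterm i k))
      _ = ∑ i, β i * ∑ k, y j k * s i k := by
          rw [Finset.sum_comm]
          exact Finset.sum_congr rfl (fun i _ => by rw [Finset.mul_sum])
      _ = ∑ i, β i * ∑ k, y j k * b k := by
          exact Finset.sum_congr rfl (fun i _ => by rw [hdot i])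
      _ = ∑ k, y j k * b k := by rw [← Finset.sum_mul, hsum, one_mul]
      _ = ∑ k, y j k * s j k := (hdot j).symm
      _ = ∑ k, w j k := Finset.sum_congr rfl (fun k _ => by rw [← h4 j k]; ring)
end

section
/- Let U, V be nonempty affine subspaces of ℝⁿ with U ∩ V = ∅. Then dim(aff(U ∪ V)) = dim(U) + dim(V) + 1 - dim(lin(U) ∩ lin(V)). -/
/-- For nonempty affine subspaces `U, V ⊆ ℝⁿ` with `U ∩ V = ∅`,
`dim(aff(U ∪ V)) = dim U + dim V + 1 - dim(lin(U) ∩ lin(V))` (stated additively to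
avoid truncated subtraction). -/
theorem dim_affineSpan_union_of_inter_empty {n : ℕ}
    (U V : AffineSubspace ℝ (Fin n → ℝ))
    (hU : (U : Set (Fin n → ℝ)).Nonempty) (hV : (V : Set (Fin n → ℝ)).Nonempty)
    (hUV : (U : Set (Fin n → ℝ)) ∩ (V : Set (Fin n → ℝ)) = ∅) :
    Module.finrank ℝ (affineSpan ℝ ((U : Set (Fin n → ℝ)) ∪ (V : Set (Fin n → ℝ)))).direction
      + Module.finrank ℝ (U.direction ⊓ V.direction : Submodule ℝ (Fin n → ℝ))
    = Module.finrank ℝ U.direction + Module.finrank ℝ V.direction + 1 := by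
  obtain ⟨u, hu⟩ := hU
  obtain ⟨v, hv⟩ := hV
  have hdisj : ∀ x, x ∈ U → x ∈ V → False := by
    intro x hxU hxV
    have : x ∈ (U : Set (Fin n → ℝ)) ∩ (V : Set (Fin n → ℝ)) := ⟨hxU, hxV⟩
    rw [hUV] at this
    exact this
  set W : Submodule ℝ (Fin n → ℝ) := U.direction ⊔ V.direction with hW
  have hnot : v -ᵥ u ∉ W := by
    intro h
    rw [hW, Submodule.mem_sup] at h
    obtain ⟨d1, hd1, d2, hd2, hsum⟩ := h
    have hmemU : d1 +ᵥ u ∈ U := AffineSubspace.vadd_mem_of_mem_direction hd1 hu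
    have hmemV : d1 +ᵥ u ∈ V := by
      have : v -ᵥ (d1 +ᵥ u) = d2 := by
        rw [vsub_vadd_eq_vsub_sub, ← hsum]; abel
      have h2 : v -ᵥ (d1 +ᵥ u) ∈ V.direction := this ▸ hd2
      have h3 : (d1 +ᵥ u) -ᵥ v ∈ V.direction := by
        rw [← neg_vsub_eq_vsub_rev]; exact V.direction.neg_mem h2
      exact (AffineSubspace.vsub_right_mem_direction_iff_mem hv _).mp h3
    exact hdisj _ hmemU hmemV
  have hne : v -ᵥ u ≠ 0 := fun h => hnot (h ▸ W.zero_mem)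
  have hspan : affineSpan ℝ ((U : Set (Fin n → ℝ)) ∪ (V : Set (Fin n → ℝ))) = U ⊔ V := rfl
  have hdir : (U ⊔ V).direction = W ⊔ ℝ ∙ (v -ᵥ u) := AffineSubspace.direction_sup hu hv
  have hinf : W ⊓ (ℝ ∙ (v -ᵥ u)) = ⊥ := by
    rw [eq_bot_iff]
    intro x ⟨hxW, hxS⟩
    obtain ⟨c, rfl⟩ := Submodule.mem_span_singleton.mp hxS
    rcases eq_or_ne c 0 with rfl | hc
    · simp
    · exact absurd (by
        have := W.smul_mem c⁻¹ hxW
        rwa [smul_smul, inv_mul_cancel₀ hc, one_smul] at this : v -ᵥ u ∈ W) hnot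
  have h1 : Module.finrank ℝ (W ⊔ ℝ ∙ (v -ᵥ u) : Submodule ℝ (Fin n → ℝ))
      = Module.finrank ℝ W + 1 := by
    have := Submodule.finrank_sup_add_finrank_inf_eq W (ℝ ∙ (v -ᵥ u))
    rw [hinf, finrank_bot, add_zero, finrank_span_singleton hne] at this
    exact this
  have h2 := Submodule.finrank_sup_add_finrank_inf_eq U.direction V.direction
  rw [← hW] at h2
  rw [hspan, hdir, h1]
  omega
end

section
/- Let U be a NDAS concave function on ℝ^m_{++}, (x⁰,y⁰,s⁰) and (x¹,y¹,s¹) weighted analytic centers of weight vectors w⁰ and w¹ in the simplex, g⁰ and g¹ supergradients of U at s⁰ and s¹, and s^{opt} a maximizer of U over the set of centric slack vectors. Then at least one of the weight vectors Y⁰s^{opt} and Y¹s^{opt} lies in {w : ⟨(Y⁰)⁻¹g⁰, w - w⁰⟩ ≥ 0 and ⟨(Y¹)⁻¹g¹, w - w¹⟩ ≥ 0}; in particular this set has nonempty intersection with W_{s^{opt}}. -/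
open Matrix

/-- `s` is a centric slack vector. -/
def Centric {m n : ℕ} (A : Matrix (Fin m) (Fin n) ℝ) (b : Fin m → ℝ)
    (s : Fin m → ℝ) : Prop :=
  ∃ (w : Fin m → ℝ) (x : Fin n → ℝ) (y : Fin m → ℝ),
    (∀ i, 0 < w i) ∧ (∑ i, w i) = 1 ∧ IsWAC A b w x y s

/-- `U` is Non-Decreasing under Affine Scaling. -/
def NDAS {m : ℕ} (U : (Fin m → ℝ) → ℝ) : Prop :=
  ∀ d : Fin m → ℝ, (∀ i, 0 < d i) →
    ((∀ s : Fin m → ℝ, (∀ i, 0 < s i) →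
        U s ≤ max (U (fun i => d i * s i)) (U (fun i => s i / d i))) ∧
     (∀ s0 : Fin m → ℝ, (∀ i, 0 < s0 i) → U s0 ≤ U (fun i => d i * s0 i) →
        ∀ s : Fin m → ℝ, (∀ i, 0 < s i) → U s ≤ U (fun i => d i * s i)))

lemma dot_slack_const {m n : ℕ} (A : Matrix (Fin m) (Fin n) ℝ) (b : Fin m → ℝ)
    (y : Fin m → ℝ) (hy : A.transpose.mulVec y = 0)
    (x : Fin n → ℝ) (s : Fin m → ℝ) (h : A.mulVec x + s = b) :
    y ⬝ᵥ s = y ⬝ᵥ b := by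
  have hs : s = b - A.mulVec x := by rw [← h]; abel
  rw [hs, dotProduct_sub, dotProduct_mulVec, ← Matrix.mulVec_transpose, hy,
    zero_dotProduct, sub_zero]

/-- For an NDAS concave utility `U`, weighted centers `(x⁰,y⁰,s⁰)`,
`(x¹,y¹,s¹)` of simplex weights `w⁰, w¹`, supergradients `g⁰, g¹` of `U` at `s⁰, s¹`,
and a maximizer `s^{opt}` of `U` over centric slacks, at least one of `Y⁰s^{opt}`,
`Y¹s^{opt}` lies in `{w : ⟨(Y⁰)⁻¹g⁰, w - w⁰⟩ ≥ 0 ∧ ⟨(Y¹)⁻¹g¹, w - w¹⟩ ≥ 0}`; in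
particular this set meets `W_{s^{opt}}`. -/
theorem NDAS_two_cuts_keep_optimum {m n : ℕ}
    (A : Matrix (Fin m) (Fin n) ℝ) (b : Fin m → ℝ)
    (U : (Fin m → ℝ) → ℝ)
    (hU : ConcaveOn ℝ {s : Fin m → ℝ | ∀ i, 0 < s i} U)
    (hNDAS : NDAS U)
    (w0 w1 : Fin m → ℝ) (x0 x1 : Fin n → ℝ) (y0 y1 s0 s1 : Fin m → ℝ)
    (hw0 : (∀ i, 0 < w0 i) ∧ (∑ i, w0 i) = 1)
    (hw1 : (∀ i, 0 < w1 i) ∧ (∑ i, w1 i) = 1)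
    (h0 : IsWAC A b w0 x0 y0 s0) (h1 : IsWAC A b w1 x1 y1 s1)
    (g0 g1 : Fin m → ℝ)
    (hg0 : ∀ s : Fin m → ℝ, (∀ i, 0 < s i) → U s ≤ U s0 + g0 ⬝ᵥ (s - s0))
    (hg1 : ∀ s : Fin m → ℝ, (∀ i, 0 < s i) → U s ≤ U s1 + g1 ⬝ᵥ (s - s1))
    (sopt : Fin m → ℝ) (hsopt : Centric A b sopt)
    (hmax : ∀ s : Fin m → ℝ, Centric A b s → U s ≤ U sopt) :
    ((0 ≤ (fun i => g0 i / y0 i) ⬝ᵥ ((fun i => y0 i * sopt i) - w0) ∧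
      0 ≤ (fun i => g1 i / y1 i) ⬝ᵥ ((fun i => y0 i * sopt i) - w1)) ∨
     (0 ≤ (fun i => g0 i / y0 i) ⬝ᵥ ((fun i => y1 i * sopt i) - w0) ∧
      0 ≤ (fun i => g1 i / y1 i) ⬝ᵥ ((fun i => y1 i * sopt i) - w1))) ∧
    ∃ w : Fin m → ℝ,
      0 ≤ (fun i => g0 i / y0 i) ⬝ᵥ (w - w0) ∧
      0 ≤ (fun i => g1 i / y1 i) ⬝ᵥ (w - w1) ∧
      (∀ i, 0 < w i) ∧ (∑ i, w i) = 1 ∧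
      ∃ (x : Fin n → ℝ) (y : Fin m → ℝ), IsWAC A b w x y sopt := by
  obtain ⟨hAx0, hs0pos, hAty0, hsy0⟩ := h0
  obtain ⟨hAx1, hs1pos, hAty1, hsy1⟩ := h1
  obtain ⟨wo, xo, yo, hwopos, hwosum, hAxo, hsoptpos, hAtyo, hsyo⟩ := hsopt
  have hy0pos : ∀ i, 0 < y0 i := fun i => by nlinarith [hsy0 i, hw0.1 i, hs0pos i]
  have hy1pos : ∀ i, 0 < y1 i := fun i => by nlinarith [hsy1 i, hw1.1 i, hs1pos i]
  have hcent0 : Centric A b s0 :=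
    ⟨w0, x0, y0, hw0.1, hw0.2, hAx0, hs0pos, hAty0, hsy0⟩
  have hcent1 : Centric A b s1 :=
    ⟨w1, x1, y1, hw1.1, hw1.2, hAx1, hs1pos, hAty1, hsy1⟩
  have hU0 : U s0 ≤ U sopt := hmax s0 hcent0
  have hU1 : U s1 ≤ U sopt := hmax s1 hcent1
  -- the sums ∑ y0 i * sopt i and ∑ y1 i * sopt i equal 1
  have hsum0 : (∑ i, y0 i * sopt i) = 1 := by
    have h1' : y0 ⬝ᵥ sopt = y0 ⬝ᵥ s0 := by
      rw [dot_slack_const A b y0 hAty0 xo sopt hAxo,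
        dot_slack_const A b y0 hAty0 x0 s0 hAx0]
    have h2' : y0 ⬝ᵥ s0 = 1 := by
      have hw : ∀ i, y0 i * s0 i = w0 i := fun i => by rw [mul_comm]; exact hsy0 i
      simp only [dotProduct, hw]; exact hw0.2
    simpa [dotProduct] using h1'.trans h2'
  have hsum1 : (∑ i, y1 i * sopt i) = 1 := by
    have h1' : y1 ⬝ᵥ sopt = y1 ⬝ᵥ s1 := by
      rw [dot_slack_const A b y1 hAty1 xo sopt hAxo,
        dot_slack_const A b y1 hAty1 x1 s1 hAx1]
    have h2' : y1 ⬝ᵥ s1 = 1 := by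
      have hw : ∀ i, y1 i * s1 i = w1 i := fun i => by rw [mul_comm]; exact hsy1 i
      simp only [dotProduct, hw]; exact hw1.2
    simpa [dotProduct] using h1'.trans h2'
  -- rewriting the four dot products
  have e00 : (fun i => g0 i / y0 i) ⬝ᵥ ((fun i => y0 i * sopt i) - w0)
      = g0 ⬝ᵥ (sopt - s0) := by
    simp only [dotProduct, Pi.sub_apply]
    refine Finset.sum_congr rfl fun i _ => ?_
    have hne := (hy0pos i).ne'
    rw [← hsy0 i]
    field_simp
  have e11 : (fun i => g1 i / y1 i) ⬝ᵥ ((fun i => y1 i * sopt i) - w1)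
      = g1 ⬝ᵥ (sopt - s1) := by
    simp only [dotProduct, Pi.sub_apply]
    refine Finset.sum_congr rfl fun i _ => ?_
    have hne := (hy1pos i).ne'
    rw [← hsy1 i]
    field_simp
  have e10 : (fun i => g1 i / y1 i) ⬝ᵥ ((fun i => y0 i * sopt i) - w1)
      = g1 ⬝ᵥ ((fun i => y0 i / y1 i * sopt i) - s1) := by
    simp only [dotProduct, Pi.sub_apply]
    refine Finset.sum_congr rfl fun i _ => ?_
    have hne := (hy1pos i).ne'
    rw [← hsy1 i]
    have h' : y0 i / y1 i * sopt i - s1 i = (y0 i * sopt i - s1 i * y1 i) / y1 i := by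
      field_simp
    rw [h']
    ring
  have e01 : (fun i => g0 i / y0 i) ⬝ᵥ ((fun i => y1 i * sopt i) - w0)
      = g0 ⬝ᵥ ((fun i => y1 i / y0 i * sopt i) - s0) := by
    simp only [dotProduct, Pi.sub_apply]
    refine Finset.sum_congr rfl fun i _ => ?_
    have hne := (hy0pos i).ne'
    rw [← hsy0 i]
    have h' : y1 i / y0 i * sopt i - s0 i = (y1 i * sopt i - s0 i * y0 i) / y0 i := by
      field_simp
    rw [h']
    ring
  -- basic supergradient nonnegativity
  have p0 : 0 ≤ g0 ⬝ᵥ (sopt - s0) := by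
    have := hg0 sopt hsoptpos; linarith
  have p1 : 0 ≤ g1 ⬝ᵥ (sopt - s1) := by
    have := hg1 sopt hsoptpos; linarith
  -- NDAS with d = y0 / y1
  have hdpos : ∀ i, 0 < y0 i / y1 i := fun i => div_pos (hy0pos i) (hy1pos i)
  obtain ⟨hm, -⟩ := hNDAS (fun i => y0 i / y1 i) hdpos
  have hmm := hm sopt hsoptpos
  rcases le_max_iff.mp hmm with hca | hcb
  · -- U sopt ≤ U ((y0/y1) * sopt) : use w = Y0 sopt
    have hpos : ∀ i, 0 < y0 i / y1 i * sopt i :=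
      fun i => mul_pos (hdpos i) (hsoptpos i)
    have cross : 0 ≤ g1 ⬝ᵥ ((fun i => y0 i / y1 i * sopt i) - s1) := by
      have := hg1 (fun i => y0 i / y1 i * sopt i) hpos
      linarith
    refine ⟨Or.inl ⟨by rw [e00]; exact p0, by rw [e10]; exact cross⟩,
      ⟨fun i => y0 i * sopt i, by rw [e00]; exact p0, by rw [e10]; exact cross,
        fun i => mul_pos (hy0pos i) (hsoptpos i), hsum0,
        xo, y0, hAxo, hsoptpos, hAty0, fun i => mul_comm _ _⟩⟩
  · -- U sopt ≤ U (sopt / (y0/y1)) : use w = Y1 sopt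
    have hrw : (fun i => sopt i / (y0 i / y1 i)) = fun i => y1 i / y0 i * sopt i := by
      funext i
      have h0' := (hy0pos i).ne'
      have h1' := (hy1pos i).ne'
      field_simp
    rw [hrw] at hcb
    have hpos : ∀ i, 0 < y1 i / y0 i * sopt i :=
      fun i => mul_pos (div_pos (hy1pos i) (hy0pos i)) (hsoptpos i)
    have cross : 0 ≤ g0 ⬝ᵥ ((fun i => y1 i / y0 i * sopt i) - s0) := by
      have := hg0 (fun i => y1 i / y0 i * sopt i) hpos
      linarith
    refine ⟨Or.inr ⟨by rw [e01]; exact cross, by rw [e11]; exact p1⟩,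
      ⟨fun i => y1 i * sopt i, by rw [e01]; exact cross, by rw [e11]; exact p1,
        fun i => mul_pos (hy1pos i) (hsoptpos i), hsum1,
        xo, y1, hAxo, hsoptpos, hAty1, fun i => mul_comm _ _⟩⟩
end

section
/- Let s⁰, s¹ be centric slack vectors with corresponding weighted centers (x⁰,y⁰,s⁰), (x¹,y¹,s¹), let g¹ be a supergradient of the concave utility U at s¹, and define u¹ := (S¹)⁻¹Ah¹ where h¹ = (AᵀY⁰(S¹)⁻¹A)⁻¹Aᵀg¹. Then (1) the hyperplane through Y¹s¹ with normal u¹ contains every weight vector of the form S¹y with Aᵀy = 0 (i.e., all of W_{s¹}), and (2) ⟨u¹, Y⁰s^{opt} - Y¹s¹⟩ = ⟨g¹, s^{opt} - s¹⟩ ≥ 0 for every maximizer s^{opt} of U over the centric slack vectors. -/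
open Matrix

/-- Orthogonality: the dot product of `u1` against any `S1 y` with `Aᵀ y = 0` vanishes. -/
theorem aux_key {m n : ℕ} (A : Matrix (Fin m) (Fin n) ℝ) (s1 u1 : Fin m → ℝ) (h1v : Fin n → ℝ)
    (hs1 : ∀ i, s1 i ≠ 0)
    (hu1' : ∀ i, u1 i = (s1 i)⁻¹ * (A.mulVec h1v) i)
    (y : Fin m → ℝ) (hy : A.transpose.mulVec y = 0) :
    u1 ⬝ᵥ (fun i => s1 i * y i) = 0 := by
  have h : u1 ⬝ᵥ (fun i => s1 i * y i) = y ⬝ᵥ (A.mulVec h1v) := by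
    simp only [dotProduct]
    refine Finset.sum_congr rfl fun i _ => ?_
    rw [hu1' i, show (s1 i)⁻¹ * (A.mulVec h1v) i * (s1 i * y i)
      = ((s1 i)⁻¹ * s1 i) * ((A.mulVec h1v) i * y i) from by ring,
      inv_mul_cancel₀ (hs1 i), one_mul, mul_comm]
  rw [h, dotProduct_mulVec, ← Matrix.mulVec_transpose, hy, zero_dotProduct]

/-- `Aᵀ D A` is nonsingular when `A` has independent columns and `D` is a positive diagonal. -/
theorem aux_M {m n : ℕ} (A : Matrix (Fin m) (Fin n) ℝ)
    (hA : LinearIndependent ℝ (fun j : Fin n => A.transpose j))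
    (c : Fin m → ℝ) (hc : ∀ i, 0 < c i) :
    IsUnit (A.transpose * Matrix.diagonal c * A).det := by
  set M := A.transpose * Matrix.diagonal c * A with hM
  rw [isUnit_iff_ne_zero]
  intro hdet
  obtain ⟨v, hv, hMv⟩ := (Matrix.exists_mulVec_eq_zero_iff).2 hdet
  have hAv : A.mulVec v = 0 := by
    have hq : v ⬝ᵥ M.mulVec v = ∑ i, c i * ((A.mulVec v) i)^2 := by
      rw [hM, Matrix.mul_assoc, ← Matrix.mulVec_mulVec, ← Matrix.mulVec_mulVec,
        Matrix.dotProduct_mulVec, ← Matrix.mulVec_transpose, Matrix.transpose_transpose]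
      simp only [dotProduct, Matrix.mulVec_diagonal]
      exact Finset.sum_congr rfl fun i _ => by ring
    rw [hMv, dotProduct_zero] at hq
    have := fun i (_ : i ∈ Finset.univ) =>
      mul_nonneg (hc i).le (sq_nonneg ((A.mulVec v) i))
    have hall := (Finset.sum_eq_zero_iff_of_nonneg this).1 hq.symm
    funext i
    have := hall i (Finset.mem_univ i)
    have h2 : ((A.mulVec v) i)^2 = 0 := by
      rcases mul_eq_zero.1 this with h | h
      · exact absurd h (hc i).ne'
      · exact h
    simpa using pow_eq_zero_iff (n := 2) (by norm_num) |>.1 h2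
  apply hv
  have hsum : ∑ j, v j • (fun i => A i j) = 0 := by
    funext i
    have : (A.mulVec v) i = ∑ j, v j * A i j := by
      simp [Matrix.mulVec, dotProduct, mul_comm]
    rw [hAv] at this
    simpa [Finset.sum_apply] using this.symm
  have := (Fintype.linearIndependent_iff.1 hA) v hsum
  funext j; exact this j

/-- With `u¹ = (S¹)⁻¹Ah¹`, `h¹ = (AᵀY⁰(S¹)⁻¹A)⁻¹Aᵀg¹`, the hyperplane
through `Y¹s¹` with normal `u¹` contains every weight vector `S¹y` with `Aᵀy = 0`
(all of `W_{s¹}`), and `⟨u¹, Y⁰s^{opt} - Y¹s¹⟩ = ⟨g¹, s^{opt} - s¹⟩ ≥ 0` for every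
maximizer `s^{opt}` of the concave utility `U` over the centric slack vectors. -/
theorem w_space_cut_properties {m n : ℕ}
    (A : Matrix (Fin m) (Fin n) ℝ) (b : Fin m → ℝ)
    (hA : LinearIndependent ℝ (fun j : Fin n => A.transpose j))
    (U : (Fin m → ℝ) → ℝ)
    (hU : ConcaveOn ℝ {s : Fin m → ℝ | ∀ i, 0 < s i} U)
    (w0 w1 : Fin m → ℝ) (x0 x1 : Fin n → ℝ) (y0 y1 s0 s1 : Fin m → ℝ)
    (hw0 : (∀ i, 0 < w0 i) ∧ (∑ i, w0 i) = 1)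
    (hw1 : (∀ i, 0 < w1 i) ∧ (∑ i, w1 i) = 1)
    (h0 : IsWAC A b w0 x0 y0 s0) (h1 : IsWAC A b w1 x1 y1 s1)
    (hy0 : ∀ i, 0 < y0 i) (hy1 : ∀ i, 0 < y1 i)
    (g1 : Fin m → ℝ)
    (hg1 : ∀ s : Fin m → ℝ, (∀ i, 0 < s i) → U s ≤ U s1 + g1 ⬝ᵥ (s - s1))
    (h1v : Fin n → ℝ)
    (hh1 : h1v = (A.transpose * Matrix.diagonal y0 * (Matrix.diagonal s1)⁻¹ * A)⁻¹.mulVec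
      (A.transpose.mulVec g1))
    (u1 : Fin m → ℝ)
    (hu1 : u1 = (Matrix.diagonal s1)⁻¹.mulVec (A.mulVec h1v))
    (sopt : Fin m → ℝ) (hsopt : Centric A b sopt)
    (hmax : ∀ s : Fin m → ℝ, Centric A b s → U s ≤ U sopt) :
    (∀ y : Fin m → ℝ, A.transpose.mulVec y = 0 →
        u1 ⬝ᵥ ((fun i => s1 i * y i) - (fun i => y1 i * s1 i)) = 0) ∧
    u1 ⬝ᵥ ((fun i => y0 i * sopt i) - (fun i => y1 i * s1 i)) = g1 ⬝ᵥ (sopt - s1) ∧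
    0 ≤ g1 ⬝ᵥ (sopt - s1) := by
  obtain ⟨hApb1, hs1pos, hy1orth, hws1⟩ := h1
  obtain ⟨hApb0, hs0pos, hy0orth, hws0⟩ := h0
  have hs1 : ∀ i, s1 i ≠ 0 := fun i => (hs1pos i).ne'
  -- diagonal inverse
  have hinv : (Matrix.diagonal s1)⁻¹ = Matrix.diagonal (fun i => (s1 i)⁻¹) := by
    apply Matrix.inv_eq_right_inv
    rw [Matrix.diagonal_mul_diagonal,
      show (fun i => s1 i * (s1 i)⁻¹) = fun _ : Fin m => (1:ℝ) from
        funext fun i => mul_inv_cancel₀ (hs1 i), Matrix.diagonal_one]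
  have hu1' : ∀ i, u1 i = (s1 i)⁻¹ * (A.mulVec h1v) i := by
    intro i
    rw [hu1, hinv]
    simp [Matrix.mulVec_diagonal]
  have hecomm : (fun i => y1 i * s1 i) = (fun i => s1 i * y1 i) :=
    funext fun i => mul_comm _ _
  have hz : u1 ⬝ᵥ (fun i => y1 i * s1 i) = 0 := by
    rw [hecomm]; exact aux_key A s1 u1 h1v hs1 hu1' y1 hy1orth
  -- the matrix M
  set c : Fin m → ℝ := fun i => y0 i * (s1 i)⁻¹ with hc
  have hMeq : A.transpose * Matrix.diagonal y0 * (Matrix.diagonal s1)⁻¹ * A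
      = A.transpose * Matrix.diagonal c * A := by
    rw [hinv, Matrix.mul_assoc (A.transpose), Matrix.diagonal_mul_diagonal]
  set M := A.transpose * Matrix.diagonal c * A with hMdef
  have hMdet : IsUnit M.det :=
    aux_M A hA c (fun i => mul_pos (hy0 i) (inv_pos.2 (hs1pos i)))
  have hMsymm : M.transpose = M := by
    rw [hMdef]
    simp [Matrix.transpose_mul, Matrix.diagonal_transpose, Matrix.mul_assoc]
  have hMh : M.mulVec h1v = A.transpose.mulVec g1 := by
    rw [hh1, hMeq, Matrix.mulVec_mulVec, Matrix.mul_nonsing_inv _ hMdet,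
      Matrix.one_mulVec]
  refine ⟨?_, ?_, ?_⟩
  · intro y hy
    rw [dotProduct_sub, aux_key A s1 u1 h1v hs1 hu1' y hy, hz, sub_zero]
  · obtain ⟨wopt, xopt, yopt, hwo, hwsum, hApbo, hsoptpos, hyopto, hwso⟩ := hsopt
    set d : Fin n → ℝ := x1 - xopt with hd
    have hsd : sopt - s1 = A.mulVec d := by
      funext i
      have e1 := congrFun hApb1 i
      have e2 := congrFun hApbo i
      have e3 : (A.mulVec d) i = (A.mulVec x1) i - (A.mulVec xopt) i := by
        rw [hd, Matrix.mulVec_sub]; rfl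
      simp only [Pi.add_apply, Pi.sub_apply] at *
      linarith
    have hsopt' : ∀ i, sopt i = s1 i + (A.mulVec d) i := by
      intro i
      have := congrFun hsd i
      simp only [Pi.sub_apply] at this
      linarith
    have step1 : u1 ⬝ᵥ (fun i => y0 i * sopt i)
        = (A.mulVec h1v) ⬝ᵥ y0 + ∑ i, c i * (A.mulVec h1v) i * (A.mulVec d) i := by
      simp only [dotProduct]
      rw [← Finset.sum_add_distrib]
      refine Finset.sum_congr rfl fun i _ => ?_
      rw [hu1' i, hsopt' i, hc]
      have h := hs1 i
      field_simp
    have e0 : (A.mulVec h1v) ⬝ᵥ y0 = 0 := by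
      rw [dotProduct_comm, dotProduct_mulVec, ← Matrix.mulVec_transpose, hy0orth,
        zero_dotProduct]
    have step2 : ∑ i, c i * (A.mulVec h1v) i * (A.mulVec d) i = h1v ⬝ᵥ M.mulVec d := by
      rw [hMdef, Matrix.mul_assoc, ← Matrix.mulVec_mulVec, ← Matrix.mulVec_mulVec,
        Matrix.dotProduct_mulVec, ← Matrix.mulVec_transpose, Matrix.transpose_transpose]
      simp only [dotProduct, Matrix.mulVec_diagonal]
      exact Finset.sum_congr rfl fun i _ => by ring
    have step3 : h1v ⬝ᵥ M.mulVec d = (A.transpose.mulVec g1) ⬝ᵥ d := by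
      rw [Matrix.dotProduct_mulVec, ← Matrix.mulVec_transpose, hMsymm, hMh]
    have step4 : (A.transpose.mulVec g1) ⬝ᵥ d = g1 ⬝ᵥ (sopt - s1) := by
      rw [hsd, Matrix.dotProduct_mulVec, Matrix.mulVec_transpose]
    rw [dotProduct_sub, hz, sub_zero, step1, e0, zero_add, step2, step3, step4]
  · obtain ⟨wopt, xopt, yopt, hwo, hwsum, hApbo, hsoptpos, hyopto, hwso⟩ := hsopt
    have hc1 : Centric A b s1 := ⟨w1, x1, y1, hw1.1, hw1.2, hApb1, hs1pos, hy1orth, hws1⟩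
    have hub := hg1 sopt hsoptpos
    have hlb := hmax s1 hc1
    linarith
end

section
/- Let w > 0 with Σᵢwᵢ = 1 and let (x(w), y, s) be its weighted analytic center. If for an index i one has wᵢ ≥ yᵢ‖Δbᵢ‖₁, then ⟨aᵢ, x(w)⟩ ≤ b̃ᵢ for every b̃ᵢ = bᵢ⁽⁰⁾ + ⟨Δbᵢ, z⟩ with z ∈ [-1,1]^{N_i}, i.e., the i-th constraint is robustly feasible at x(w). -/
open Matrix

/-- Let `w > 0` with `Σᵢ wᵢ = 1` and `(x(w), y, s)` its weighted
analytic center. If `wᵢ ≥ yᵢ ‖Δbᵢ‖₁` for an index `i`, then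
`⟨aᵢ, x(w)⟩ ≤ bᵢ⁽⁰⁾ + ⟨Δbᵢ, z⟩` for every `z ∈ [-1,1]^{Nᵢ}`: the `i`-th constraint
is robustly feasible at `x(w)`. -/
theorem weight_bound_implies_robust_feasibility {m n : ℕ} (N : Fin m → ℕ)
    (A : Matrix (Fin m) (Fin n) ℝ) (b0 : Fin m → ℝ)
    (Δb : (i : Fin m) → Fin (N i) → ℝ) (hΔ : ∀ i l, 0 < Δb i l)
    (w : Fin m → ℝ) (hw : ∀ i, 0 < w i) (hw1 : ∑ i, w i = 1)
    (x : Fin n → ℝ) (y s : Fin m → ℝ)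
    (hWAC : IsWAC A b0 w x y s)
    (i : Fin m) (hi : y i * (∑ l, Δb i l) ≤ w i) :
    ∀ z : Fin (N i) → ℝ, (∀ l, -1 ≤ z l ∧ z l ≤ 1) →
      A i ⬝ᵥ x ≤ b0 i + Δb i ⬝ᵥ z := by
  intro z hz
  obtain ⟨hAx, hs, _, hsy⟩ := hWAC
  have hAi : A i ⬝ᵥ x = b0 i - s i := by
    have := congrFun hAx i
    simp only [Pi.add_apply] at this
    have : A.mulVec x i = b0 i - s i := by linarith
    simpa [Matrix.mulVec, dotProduct] using this
  have hy : 0 < y i := by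
    have h := hsy i
    nlinarith [hs i, hw i]
  have hsum : ∑ l, Δb i l ≤ s i := by
    have h := hsy i
    have := hi
    nlinarith [hs i]
  have hdot : -(∑ l, Δb i l) ≤ Δb i ⬝ᵥ z := by
    rw [dotProduct, ← Finset.sum_neg_distrib]
    apply Finset.sum_le_sum
    intro l _
    have := (hz l).1
    nlinarith [hΔ i l]
  rw [hAi]
  linarith
end
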